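/- Under de Casteljau subdivision at parameter 1/2, the maximum absolute second difference of each of the two resulting control polygons is at most one quarter of that of the original: if p₀,…,pₙ are control points and q₀,…,qₙ are the control points of either half produced by subdivision at t = 1/2, then max_{0<m<n}|q_{m-1} - 2qₘ + q_{m+1}| ≤ (1/4)·max_{0<m<n}|p_{m-1} - 2pₘ + p_{m+1}|. -/
import Mathlib


open Real

/-- The de Casteljau scheme at parameter `1/2`: `deCasteljau p r j` is `p^r_j`. -/
noncomputable def deCasteljau (p : ℕ → ℝ) : ℕ → ℕ → ℝ
  | 0, j => p j
  | r + 1, j => (deCasteljau p r j + deCasteljau p r (j + 1)) / 2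

lemma deCasteljau_second_diff_bound (p : ℕ → ℝ) (n : ℕ) (M : ℝ)
    (hM : ∀ m ∈ Finset.Ico 1 n, |p (m - 1) - 2 * p m + p (m + 1)| ≤ M) :
    ∀ r j, j + r + 2 ≤ n →
      |deCasteljau p r j - 2 * deCasteljau p r (j + 1) + deCasteljau p r (j + 2)| ≤ M := by
  intro r
  induction r with
  | zero =>
    intro j hj
    have := hM (j + 1) (Finset.mem_Ico.mpr ⟨by omega, by omega⟩)
    simpa [deCasteljau] using this
  | succ r ih =>
    intro j hj
    have h1 := ih j (by omega)
    have h2 := ih (j + 1) (by omega)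
    have : deCasteljau p (r + 1) j - 2 * deCasteljau p (r + 1) (j + 1) +
        deCasteljau p (r + 1) (j + 2) =
        ((deCasteljau p r j - 2 * deCasteljau p r (j + 1) + deCasteljau p r (j + 2)) +
         (deCasteljau p r (j + 1) - 2 * deCasteljau p r (j + 2) + deCasteljau p r (j + 3))) / 2 := by
      simp only [deCasteljau]
      ring_nf
    rw [this]
    calc |_| ≤ (|deCasteljau p r j - 2 * deCasteljau p r (j + 1) + deCasteljau p r (j + 2)| +
        |deCasteljau p r (j + 1) - 2 * deCasteljau p r (j + 2) + deCasteljau p r (j + 3)|) / 2 := by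
          rw [abs_div]
          simp only [abs_two]
          gcongr
          exact abs_add_le _ _
      _ ≤ (M + M) / 2 := by gcongr
      _ = M := by ring

/-- Under de Casteljau subdivision at parameter `1/2`, the maximum absolute second
difference of each of the two resulting control polygons (left half `j ↦ p^j_0`,
right half `j ↦ p^{n-j}_j`) is at most one quarter of that of the original. -/
theorem deCasteljau_second_difference (n : ℕ) (hn : 2 ≤ n) (p : ℕ → ℝ) :
    ((Finset.Ico 1 n).sup' (Finset.nonempty_Ico.mpr (by omega))
        (fun m => |deCasteljau p (m - 1) 0 - 2 * deCasteljau p m 0 +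
          deCasteljau p (m + 1) 0|) ≤
      (1 / 4) * (Finset.Ico 1 n).sup' (Finset.nonempty_Ico.mpr (by omega))
        (fun m => |p (m - 1) - 2 * p m + p (m + 1)|)) ∧
    ((Finset.Ico 1 n).sup' (Finset.nonempty_Ico.mpr (by omega))
        (fun m => |deCasteljau p (n - (m - 1)) (m - 1) - 2 * deCasteljau p (n - m) m +
          deCasteljau p (n - (m + 1)) (m + 1)|) ≤
      (1 / 4) * (Finset.Ico 1 n).sup' (Finset.nonempty_Ico.mpr (by omega))
        (fun m => |p (m - 1) - 2 * p m + p (m + 1)|)) := by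
  set M := (Finset.Ico 1 n).sup' (Finset.nonempty_Ico.mpr (by omega))
      (fun m => |p (m - 1) - 2 * p m + p (m + 1)|) with hMdef
  have hM : ∀ m ∈ Finset.Ico 1 n, |p (m - 1) - 2 * p m + p (m + 1)| ≤ M := fun m hm =>
    Finset.le_sup' (fun m => |p (m - 1) - 2 * p m + p (m + 1)|) hm
  have key := deCasteljau_second_diff_bound p n M hM
  constructor
  · apply Finset.sup'_le
    intro m hm
    obtain ⟨h1, h2⟩ := Finset.mem_Ico.mp hm
    obtain ⟨k, rfl⟩ : ∃ k, m = k + 1 := ⟨m - 1, by omega⟩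
    have heq : deCasteljau p (k + 1 - 1) 0 - 2 * deCasteljau p (k + 1) 0 +
        deCasteljau p (k + 1 + 1) 0 =
        (deCasteljau p k 0 - 2 * deCasteljau p k 1 + deCasteljau p k 2) / 4 := by
      simp only [Nat.add_sub_cancel, deCasteljau]
      ring_nf
    rw [heq, abs_div, abs_of_nonneg (by norm_num : (0:ℝ) ≤ 4)]
    have := key k 0 (by omega)
    norm_num at this ⊢
    linarith
  · apply Finset.sup'_le
    intro m hm
    obtain ⟨h1, h2⟩ := Finset.mem_Ico.mp hm
    obtain ⟨k, rfl⟩ : ∃ k, m = k + 1 := ⟨m - 1, by omega⟩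
    set r := n - (k + 2) with hr
    have e1 : n - (k + 1 - 1) = r + 2 := by omega
    have e2 : n - (k + 1) = r + 1 := by omega
    have e3 : n - (k + 1 + 1) = r := by omega
    have e4 : k + 1 - 1 = k := by omega
    rw [e1, e2, e4]
    have heq : deCasteljau p (r + 2) k - 2 * deCasteljau p (r + 1) (k + 1) +
        deCasteljau p r (k + 1 + 1) =
        (deCasteljau p r k - 2 * deCasteljau p r (k + 1) + deCasteljau p r (k + 2)) / 4 := by
      simp only [deCasteljau]
      ring_nf
    rw [heq, abs_div, abs_of_nonneg (by norm_num : (0:ℝ) ≤ 4)]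
    have := key r k (by omega)
    norm_num at this ⊢
    linarith
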